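/- For each 1 ≤ t ≤ θ, with probability at least 1 − o(1/n) (uniformly in t) the number of indices i ∈ [m] such that |{ j : k₁ < j ≤ k and |Φ_{ij}| ∈ Z_t }| ≥ k/4 is at most n·exp(−k). -/

import Mathlib

/-!
A clause is counted when `k/4` of its positions `j > k₁` carry variables of `Z_t`. Each such
variable entered `Z` at some step `s ≤ t` as the variable `z_s` chosen in (PI2), and all but at
most one of these positions were still unrevealed at time `s - 1`: a position `j > k₁` is
revealed earlier only as the single free positive literal of a `Z`-unique clause.

Changing the variable at the unrevealed position with the latest step `s` to any variable
outside `Z_{s-1}` leaves the process up to `Z_s` and `z_s` unchanged, and the old variable is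
read off as `z_s`. So a prescribed family of `N (K - 1)` such positions with prescribed steps
occurs with probability at most `(n - θ)^{-N (K - 1)}`, where `K = ⌈k/4⌉`. A union bound over
the at most `C(m, N) C(k (θ + 1), K - 1)^N` families bounds the probability of
`N = ⌊n e^{-k}⌋ + 1` counted clauses by `exp(-k N)`, because `k θ = O(n ln ln k)`.
-/

open Finset MeasureTheory Filter
open scoped ENNReal

attribute [local instance] Classical.propDecidable

namespace RandomKSAT

/-- A literal over `n` variables: a pair (variable, sign), `true` = positive occurrence. -/
abbrev Lit (n : ℕ) := Fin n × Bool

/-- A `k`-SAT formula with `n` variables and `m` (ordered) clauses, each an ordered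
`k`-tuple of literals. -/
abbrev Formula (n m k : ℕ) := Fin m → Fin k → Lit n

instance formulaMS (n m k : ℕ) : MeasurableSpace (Formula n m k) := ⊤

/-- The probability of an event under the uniform distribution on `Ω_k(n,m)`. -/
noncomputable def Pr (n m k : ℕ) (A : Set (Formula n m k)) : ℝ :=
  ((Finset.univ.filter (fun Φ : Formula n m k => Φ ∈ A)).card : ℝ) /
    ((Finset.univ : Finset (Formula n m k)).card : ℝ)

/-- Expectation of a random variable with respect to the uniform distribution. -/
noncomputable def EV (n m k : ℕ) (f : Formula n m k → ℝ) : ℝ :=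
  (∑ Φ : Formula n m k, f Φ) / (Fintype.card (Formula n m k) : ℝ)

/-- The uniform probability measure on `Ω_k(n,m)`. -/
noncomputable def unif (n m k : ℕ) : Measure (Formula n m k) :=
  ((Fintype.card (Formula n m k) : ℝ≥0∞))⁻¹ • Measure.count

variable {n m k : ℕ}

/-- A literal is true under an assignment. -/
def litTrue (σ : Fin n → Bool) (l : Lit n) : Prop := σ l.1 = l.2

/-- An assignment satisfies a formula if every clause contains a true literal. -/
def sat (σ : Fin n → Bool) (Φ : Formula n m k) : Prop := ∀ i, ∃ j, litTrue σ (Φ i j)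

/-- The assignment `σ_Z`: variables in `Z` are false, all others true. -/
noncomputable def sigmaZ (Z : Finset (Fin n)) : Fin n → Bool :=
  fun x => if x ∈ Z then false else true

/-- Number of positive literals of clause `i`. -/
noncomputable def posCount (Φ : Formula n m k) (i : Fin m) : ℕ :=
  (Finset.univ.filter (fun j => (Φ i j).2 = true)).card

/-- Clause `i` is all-negative. -/
def allNeg (Φ : Formula n m k) (i : Fin m) : Prop := ∀ j, (Φ i j).2 = false

/-- The set of indices of `Z`-unique clauses: exactly one positive literal with variable
outside `Z`, and no negative literal with variable in `Z`. -/
noncomputable def Uset (Φ : Formula n m k) (Z : Finset (Fin n)) : Finset (Fin m) :=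
  Finset.univ.filter (fun i =>
    (Finset.univ.filter (fun j => (Φ i j).2 = true ∧ (Φ i j).1 ∉ Z)).card = 1 ∧
    ∀ j, (Φ i j).2 = false → (Φ i j).1 ∉ Z)

/-- `U_t(x)`: the number of `Z`-unique clauses in which `x` occurs positively. -/
noncomputable def Ux (Φ : Formula n m k) (Z : Finset (Fin n)) (x : Fin n) : ℕ :=
  ((Uset Φ Z).filter (fun i => ∃ j, Φ i j = (x, true))).card

/-- `k₁ = ⌈k/2⌉`. -/
def k1 (k : ℕ) : ℕ := (k + 1) / 2

/-- The map `π₀`: `Sum.inl b` records only the sign `b` of a literal, `Sum.inr l`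
records the literal `l` itself (revealed). -/
noncomputable def pi0 (Φ : Formula n m k) (i : Fin m) (j : Fin k) : Bool ⊕ Lit n :=
  if i ∈ Uset Φ ∅ ∧ (Φ i j).2 = true then Sum.inr (Φ i j) else Sum.inl (Φ i j).2

/-- State of the Phase-1 process: the set `Z_t`, the map `π_t`, the clause `φ_t`
and variable `z_t` chosen at the last step (if any), and whether the process stopped. -/
structure P1State (n m k : ℕ) where
  Z : Finset (Fin n)
  pi : Fin m → Fin k → Bool ⊕ Lit n
  lastPhi : Option (Fin m)
  lastZ : Option (Fin n)
  stopped : Bool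

/-- One step (PI1--PI4) of the Phase-1 process. -/
noncomputable def p1step (Φ : Formula n m k) (s : P1State n m k) : P1State n m k :=
  if s.stopped then s else
  let E := Finset.univ.filter (fun i : Fin m => allNeg Φ i ∧ ∀ j, (Φ i j).1 ∉ s.Z)
  if hE : E.Nonempty then
    if hk : 0 < k then
      let φt := E.min' hE
      let J := Finset.univ.filter
        (fun j : Fin k => j.val + 1 < k1 k ∧ Ux Φ s.Z ((Φ φt j).1) = 0)
      let jsel : Fin k :=
        if hJ : J.Nonempty then J.min' hJ
        else ⟨min (k1 k - 1) (k - 1), by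
          have h1 := Nat.min_le_right (k1 k - 1) (k - 1); omega⟩
      let z := (Φ φt jsel).1
      let Z' := insert z s.Z
      { Z := Z'
        pi := fun i j =>
          if (i = φt ∧ j.val < k1 k) ∨ (Φ i j).1 ∈ Z' ∨
             (i ∈ Uset Φ Z' ∧ pi0 Φ i j = Sum.inl true)
          then Sum.inr (Φ i j) else s.pi i j
        lastPhi := some φt
        lastZ := some z
        stopped := false }
    else { s with stopped := true, lastPhi := none, lastZ := none }
  else { s with stopped := true, lastPhi := none, lastZ := none }

/-- The Phase-1 process: state after `t` steps. -/
noncomputable def p1 (Φ : Formula n m k) : ℕ → P1State n m k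
  | 0 => ⟨∅, pi0 Φ, none, none, false⟩
  | t + 1 => p1step Φ (p1 Φ t)

/-- The stopping time `T` of the Phase-1 process. -/
noncomputable def TT (Φ : Formula n m k) : ℕ := sInf {t | (p1 Φ (t + 1)).stopped = true}

/-- The set `Z = Z_T` produced by Phase 1. -/
noncomputable def ZT (Φ : Formula n m k) : Finset (Fin n) := (p1 Φ (TT Φ)).Z

/-- The set `𝒰_t`: clauses with a positive literal, but such that at time `t` no
position shows `π_t(i,j) = 1` nor a negative literal with variable in `Z_t`. -/
noncomputable def curlyU (Φ : Formula n m k) (t : ℕ) : Finset (Fin m) :=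
  Finset.univ.filter (fun i =>
    (∃ j, pi0 Φ i j ≠ Sum.inl false) ∧
    ¬ ∃ j, (p1 Φ t).pi i j = Sum.inl true ∨
      ∃ x ∈ (p1 Φ t).Z, (p1 Φ t).pi i j = Sum.inr (x, false))

/-- The map `ψ_t : 𝒰_t → V` (junk value outside `𝒰_t`). -/
noncomputable def psi (hn : 0 < n) (Φ : Formula n m k) (t : ℕ) (i : Fin m) : Fin n :=
  let s := sInf {s | i ∈ curlyU Φ s}
  if h : (Finset.univ.filter
      (fun j : Fin k => (Φ i j).2 = true ∧ (Φ i j).1 ∉ (p1 Φ s).Z)).Nonempty then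
    (Φ i ((Finset.univ.filter
      (fun j : Fin k => (Φ i j).2 = true ∧ (Φ i j).1 ∉ (p1 Φ s).Z)).min' h)).1
  else ((p1 Φ s).lastZ).getD ⟨0, hn⟩

/-- Clause `i` is `(Z,Z')`-endangered. -/
def endangered (Φ : Formula n m k) (Z Z' : Finset (Fin n)) (i : Fin m) : Prop :=
  ¬ ∃ j, litTrue (sigmaZ Z) (Φ i j) ∧ (Φ i j).1 ∉ Z'

/-- A variable is `(Z,Z')`-unsafe. -/
def unsafeVar (Φ : Formula n m k) (Z Z' : Finset (Fin n)) (x : Fin n) : Prop :=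
  x ∈ Z ∪ Z' ∨ ∃ i l, Φ i l = (x, true) ∧ ∀ j, j ≠ l →
    (((Φ i j).2 = true ∧ (Φ i j).1 ∈ Z ∪ Z') ∨ ((Φ i j).2 = false ∧ (Φ i j).1 ∉ Z))

/-- The Phase-2 while-loop with fuel. -/
noncomputable def p2go (Φ : Formula n m k) (Z : Finset (Fin n)) :
    ℕ → Finset (Fin n) → Finset (Fin n)
  | 0, Z' => Z'
  | f + 1, Z' =>
    let Q := Finset.univ.filter (fun i : Fin m =>
      endangered Φ Z Z' i ∧
        (Finset.univ.filter (fun j => (Φ i j).1 ∈ Z')).card < 3)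
    if hQ : Q.Nonempty then
      let i := Q.min' hQ
      let Ssafe := Finset.univ.filter (fun j : Fin k =>
        k1 k ≤ j.val ∧ j.val + 6 ≤ k ∧ ¬ unsafeVar Φ Z Z' ((Φ i j).1))
      let S := if 3 ≤ Ssafe.card then Ssafe
        else Finset.univ.filter (fun j : Fin k => k ≤ j.val + 5 ∧ (Φ i j).1 ∉ Z')
      p2go Φ Z f (Z' ∪ (((S.sort (· ≤ ·)).take 3).map (fun j => (Φ i j).1)).toFinset)
    else Z'

/-- The set `Z'` produced by Phase 2. -/
noncomputable def p2 (Φ : Formula n m k) : Finset (Fin n) := p2go Φ (ZT Φ) m ∅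

/-- `f` is a matching in the bipartite graph `G(Φ,Z,Z')` covering all
`(Z,Z')`-endangered clauses: it assigns to each endangered clause a variable of `Z'`
occurring in it, injectively on endangered clauses. -/
def coversEndangered (Φ : Formula n m k) (Z Z' : Finset (Fin n)) (f : Fin m → Fin n) : Prop :=
  (∀ i, endangered Φ Z Z' i → f i ∈ Z' ∧ ∃ j, (Φ i j).1 = f i) ∧
  ∀ i i', endangered Φ Z Z' i → endangered Φ Z Z' i' → f i = f i' → i = i'

/-- The output of the algorithm `Fix` (Phase 3): the assignment `σ_{Z,Z',M}` if a
matching `M` covering all `(Z,Z')`-endangered clauses exists, `none` ("fail") otherwise. -/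
noncomputable def fixOutput (Φ : Formula n m k) : Option (Fin n → Bool) :=
  if h : ∃ f : Fin m → Fin n, coversEndangered Φ (ZT Φ) (p2 Φ) f then
    some (fun x =>
      if x ∈ ZT Φ ∧ x ∉ p2 Φ then false
      else if ∃ i, endangered Φ (ZT Φ) (p2 Φ) i ∧ Classical.choose h i = x ∧
          ∃ j, Φ i j = (x, false) then false
      else true)
  else none

/-- The `σ`-algebra `F_t` generated by the equivalence classes of `≡_t`. -/
noncomputable def Ft (n m k : ℕ) (t : ℕ) : MeasurableSpace (Formula n m k) :=
  MeasurableSpace.comap (fun Φ : Formula n m k => fun s : Fin (t + 1) => (p1 Φ s.val).pi) ⊤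

/-- The `≡_t`-equivalence class of `Φ`. -/
noncomputable def cls (t : ℕ) (Φ : Formula n m k) : Finset (Formula n m k) :=
  Finset.univ.filter (fun Ψ => ∀ s ≤ t, (p1 Ψ s).pi = (p1 Φ s).pi)

/-- The set `E_t` of positions whose literal is not yet revealed at time `t`. -/
noncomputable def Et (Φ : Formula n m k) (t : ℕ) : Finset (Fin m × Fin k) :=
  Finset.univ.filter (fun p => ∃ b, (p1 Φ t).pi p.1 p.2 = Sum.inl b)

/-- `ω = (1-ε) ln k`. -/
noncomputable def omOf (ε : ℝ) (k : ℕ) : ℝ := (1 - ε) * Real.log k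

/-- `m = ⌊(1-ε) 2^k k⁻¹ (ln k) n⌋`. -/
noncomputable def mOf (ε : ℝ) (k n : ℕ) : ℕ := ⌊(1 - ε) * 2 ^ k * Real.log k / k * n⌋₊

/-- `θ = ⌊4 n k⁻¹ ln ω⌋`. -/
noncomputable def thetaOf (ε : ℝ) (k n : ℕ) : ℕ := ⌊4 * (n : ℝ) / k * Real.log (omOf ε k)⌋₊

/-- The indicator random variable `B_t` of Corollary 9. -/
noncomputable def Bt (ε : ℝ) (n m k : ℕ) (t : ℕ) : Formula n m k → ℝ := fun Φ =>
  if t ≤ TT Φ ∧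
      (∃ i, (p1 Φ t).lastPhi = some i ∧
        ∀ j : Fin k, j.val + 1 < k1 k → 0 < Ux Φ (p1 Φ (t - 1)).Z ((Φ i j).1)) ∧
      ((n : ℝ) * (k : ℝ) ^ (ε / 2 - 1) ≤
        ((Finset.univ.filter (fun x : Fin n =>
          x ∉ (p1 Φ (t - 1)).Z ∧ Ux Φ (p1 Φ (t - 1)).Z x = 0)).card : ℝ)) ∧
      (((Uset Φ (p1 Φ t).Z).card : ℝ) ≤ (1 + ε / 3) * omOf ε k * n)
  then 1 else 0

/-- The indicator `H_{tij}`. -/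
noncomputable def Hind (n m k : ℕ) (t : ℕ) (i : Fin m) (j : Fin k) : Formula n m k → ℝ :=
  fun Φ =>
  if (p1 Φ (t - 1)).pi i j = Sum.inl true ∧
      ∃ z, (p1 Φ t).lastZ = some z ∧ (p1 Φ t).pi i j = Sum.inr (z, true)
  then 1 else 0

/-- The indicator `S_{tij}`. -/
noncomputable def Sind (n m k : ℕ) (t : ℕ) (i : Fin m) (j : Fin k) : Formula n m k → ℝ :=
  fun Φ => if t ≤ TT Φ ∧ ∃ b, (p1 Φ t).pi i j = Sum.inl b then 1 else 0

lemma p1_zero (Φ : Formula n m k) : p1 Φ 0 = ⟨∅, pi0 Φ, none, none, false⟩ := rfl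

lemma p1_succ (Φ : Formula n m k) (t : ℕ) : p1 Φ (t + 1) = p1step Φ (p1 Φ t) := rfl

theorem P1State.ext {a b : P1State n m k} (hZ : a.Z = b.Z) (hpi : a.pi = b.pi)
    (hφ : a.lastPhi = b.lastPhi) (hz : a.lastZ = b.lastZ) (hs : a.stopped = b.stopped) :
    a = b := by
  cases a; cases b; simp_all

/-! The ingredients of an active step (PI1)–(PI4), named so that they can be compared
between two formulas. -/

noncomputable def stepE (Φ : Formula n m k) (W : Finset (Fin n)) : Finset (Fin m) :=
  univ.filter fun i => allNeg Φ i ∧ ∀ j, (Φ i j).1 ∉ W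

noncomputable def stepPhi (Φ : Formula n m k) (W : Finset (Fin n))
    (hE : (stepE Φ W).Nonempty) : Fin m :=
  (stepE Φ W).min' hE

noncomputable def selJ (Φ : Formula n m k) (W : Finset (Fin n)) (φt : Fin m) :
    Finset (Fin k) :=
  univ.filter fun j => j.val + 1 < k1 k ∧ Ux Φ W (Φ φt j).1 = 0

noncomputable def selj (hk : 0 < k) (Φ : Formula n m k) (W : Finset (Fin n)) (φt : Fin m) :
    Fin k :=
  if hJ : (selJ Φ W φt).Nonempty then (selJ Φ W φt).min' hJ
  else ⟨min (k1 k - 1) (k - 1), by have := Nat.min_le_right (k1 k - 1) (k - 1); omega⟩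

noncomputable def activeOut (Φ : Formula n m k) (s : P1State n m k)
    (hE : (stepE Φ s.Z).Nonempty) (hk : 0 < k) : P1State n m k :=
  let φt := stepPhi Φ s.Z hE
  let z := (Φ φt (selj hk Φ s.Z φt)).1
  { Z := insert z s.Z
    pi := fun i j =>
      if (i = φt ∧ j.val < k1 k) ∨ (Φ i j).1 ∈ insert z s.Z ∨
         (i ∈ Uset Φ (insert z s.Z) ∧ pi0 Φ i j = Sum.inl true)
      then Sum.inr (Φ i j) else s.pi i j
    lastPhi := some φt
    lastZ := some z
    stopped := false }

noncomputable def haltOut (s : P1State n m k) : P1State n m k :=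
  if s.stopped then s else { s with stopped := true, lastPhi := none, lastZ := none }

lemma activeOut_Z (Φ : Formula n m k) (s : P1State n m k)
    (hE : (stepE Φ s.Z).Nonempty) (hk : 0 < k) :
    (activeOut Φ s hE hk).Z =
      insert (Φ (stepPhi Φ s.Z hE) (selj hk Φ s.Z (stepPhi Φ s.Z hE))).1 s.Z := rfl

lemma activeOut_lastZ (Φ : Formula n m k) (s : P1State n m k)
    (hE : (stepE Φ s.Z).Nonempty) (hk : 0 < k) :
    (activeOut Φ s hE hk).lastZ =
      some (Φ (stepPhi Φ s.Z hE) (selj hk Φ s.Z (stepPhi Φ s.Z hE))).1 := rfl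

lemma activeOut_pi (Φ : Formula n m k) (s : P1State n m k)
    (hE : (stepE Φ s.Z).Nonempty) (hk : 0 < k) (i : Fin m) (j : Fin k) :
    (activeOut Φ s hE hk).pi i j =
      if (i = stepPhi Φ s.Z hE ∧ j.val < k1 k) ∨ (Φ i j).1 ∈ (activeOut Φ s hE hk).Z ∨
         (i ∈ Uset Φ (activeOut Φ s hE hk).Z ∧ pi0 Φ i j = Sum.inl true)
      then Sum.inr (Φ i j) else s.pi i j := rfl

lemma haltOut_Z (s : P1State n m k) : (haltOut s).Z = s.Z := by
  unfold haltOut; split <;> rfl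

lemma haltOut_pi (s : P1State n m k) : (haltOut s).pi = s.pi := by
  unfold haltOut; split <;> rfl

lemma p1step_of_active (Φ : Formula n m k) {s : P1State n m k} (hs : s.stopped = false)
    (hE : (stepE Φ s.Z).Nonempty) (hk : 0 < k) :
    p1step Φ s = activeOut Φ s hE hk := by
  unfold p1step
  rw [if_neg (by simp [hs])]
  exact (dif_pos hE).trans (dif_pos hk)

lemma p1step_of_not_active (Φ : Formula n m k) {s : P1State n m k}
    (h : ¬(s.stopped = false ∧ (stepE Φ s.Z).Nonempty ∧ 0 < k)) :
    p1step Φ s = haltOut s := by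
  unfold p1step haltOut
  by_cases hs : s.stopped = true
  · rw [if_pos hs, if_pos hs]
  · rw [if_neg hs, if_neg hs]
    by_cases hE : (stepE Φ s.Z).Nonempty
    · exact (dif_pos hE).trans (dif_neg fun hk => h ⟨by simpa using hs, hE, hk⟩)
    · exact dif_neg hE

lemma p1step_cases (Φ : Formula n m k) (s : P1State n m k) :
    ((p1step Φ s).Z = s.Z ∧ (p1step Φ s).pi = s.pi) ∨
      ∃ hE hk, p1step Φ s = activeOut Φ s hE hk := by
  by_cases h : s.stopped = false ∧ (stepE Φ s.Z).Nonempty ∧ 0 < k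
  · exact Or.inr ⟨h.2.1, h.2.2, p1step_of_active Φ h.1 h.2.1 h.2.2⟩
  · rw [p1step_of_not_active Φ h]
    exact Or.inl ⟨haltOut_Z s, haltOut_pi s⟩

lemma selj_lt_k1 (hk : 0 < k) (Φ : Formula n m k) (W : Finset (Fin n)) (φt : Fin m) :
    (selj hk Φ W φt).val < k1 k := by
  unfold selj
  split
  · next hJ =>
    have := (mem_filter.mp ((selJ Φ W φt).min'_mem hJ)).2.1
    omega
  · show min (k1 k - 1) (k - 1) < k1 k
    have : 0 < k1 k := by unfold k1; omega
    omega

lemma pi0_eq_inr_or_inl (Φ : Formula n m k) (i : Fin m) (j : Fin k) :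
    pi0 Φ i j = Sum.inr (Φ i j) ∨ pi0 Φ i j = Sum.inl (Φ i j).2 := by
  unfold pi0; split
  · exact Or.inl rfl
  · exact Or.inr rfl

lemma sign_eq_of_pi0_eq_inl {Φ : Formula n m k} {i : Fin m} {j : Fin k} {b : Bool}
    (h : pi0 Φ i j = Sum.inl b) : (Φ i j).2 = b := by
  rcases pi0_eq_inr_or_inl Φ i j with h' | h' <;> rw [h] at h'
  · cases h'
  · exact (Sum.inl.inj h').symm

lemma p1step_pi_eq_or (Φ : Formula n m k) (s : P1State n m k) (i : Fin m) (j : Fin k) :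
    (p1step Φ s).pi i j = s.pi i j ∨ (p1step Φ s).pi i j = Sum.inr (Φ i j) := by
  rcases p1step_cases Φ s with ⟨-, h⟩ | ⟨hE, hk, h⟩
  · exact Or.inl (by rw [h])
  · rw [h, activeOut_pi]
    split
    · exact Or.inr rfl
    · exact Or.inl rfl

lemma pi_eq_inr_or_inl (Φ : Formula n m k) (t : ℕ) (i : Fin m) (j : Fin k) :
    (p1 Φ t).pi i j = Sum.inr (Φ i j) ∨ (p1 Φ t).pi i j = Sum.inl (Φ i j).2 := by
  induction t with
  | zero => exact pi0_eq_inr_or_inl Φ i j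
  | succ t ih =>
    rcases p1step_pi_eq_or Φ (p1 Φ t) i j with h | h
    · rw [p1_succ, h]; exact ih
    · exact Or.inl h

lemma pi_eq_inr_of_le {Φ : Formula n m k} {t t' : ℕ} (htt : t ≤ t') {i : Fin m} {j : Fin k}
    (h : (p1 Φ t).pi i j = Sum.inr (Φ i j)) : (p1 Φ t').pi i j = Sum.inr (Φ i j) := by
  induction t', htt using Nat.le_induction with
  | base => exact h
  | succ t' _ ih =>
    rcases p1step_pi_eq_or Φ (p1 Φ t') i j with h' | h'
    · rw [p1_succ, h', ih]
    · exact h'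

lemma pi_eq_inl_of_le {Φ : Formula n m k} {t t' : ℕ} (htt : t ≤ t') {i : Fin m} {j : Fin k}
    {b : Bool} (h : (p1 Φ t').pi i j = Sum.inl b) : (p1 Φ t).pi i j = Sum.inl (Φ i j).2 := by
  rcases pi_eq_inr_or_inl Φ t i j with h' | h'
  · rw [pi_eq_inr_of_le htt h'] at h; cases h
  · exact h'

lemma Z_subset_succ (Φ : Formula n m k) (t : ℕ) : (p1 Φ t).Z ⊆ (p1 Φ (t + 1)).Z := by
  rcases p1step_cases Φ (p1 Φ t) with ⟨h, -⟩ | ⟨hE, hk, h⟩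
  · rw [p1_succ, h]
  · rw [p1_succ, h, activeOut_Z]; exact subset_insert _ _

lemma Z_mono {Φ : Formula n m k} {t t' : ℕ} (htt : t ≤ t') : (p1 Φ t).Z ⊆ (p1 Φ t').Z := by
  induction t', htt using Nat.le_induction with
  | base => exact Subset.refl _
  | succ t' _ ih => exact ih.trans (Z_subset_succ Φ t')

lemma card_Z_le (Φ : Formula n m k) (t : ℕ) : #(p1 Φ t).Z ≤ t := by
  induction t with
  | zero => simp [p1_zero]
  | succ t ih =>
    rcases p1step_cases Φ (p1 Φ t) with ⟨h, -⟩ | ⟨hE, hk, h⟩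
    · rw [p1_succ, h]; omega
    · rw [p1_succ, h, activeOut_Z]
      exact (card_insert_le _ _).trans (by omega)

lemma pi_eq_inr_of_mem_Z {Φ : Formula n m k} {t : ℕ} {i : Fin m} {j : Fin k}
    (h : (Φ i j).1 ∈ (p1 Φ t).Z) : (p1 Φ t).pi i j = Sum.inr (Φ i j) := by
  induction t with
  | zero => simp [p1_zero] at h
  | succ t ih =>
    rw [p1_succ] at h ⊢
    rcases p1step_cases Φ (p1 Φ t) with ⟨hZ, hpi⟩ | ⟨hE, hk, he⟩
    · rw [hZ] at h; rw [hpi]; exact ih h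
    · rw [he] at h ⊢
      rw [activeOut_pi, if_pos (Or.inr (Or.inl h))]

lemma notMem_Z_of_pi_eq_inl {Φ : Formula n m k} {t : ℕ} {i : Fin m} {j : Fin k} {b : Bool}
    (h : (p1 Φ t).pi i j = Sum.inl b) : (Φ i j).1 ∉ (p1 Φ t).Z := fun hm => by
  rw [pi_eq_inr_of_mem_Z hm] at h; cases h

lemma pi_eq_inr_of_mem_Uset {Φ : Formula n m k} {t : ℕ} {i : Fin m} {j : Fin k}
    (hU : i ∈ Uset Φ (p1 Φ t).Z) (hpos : (Φ i j).2 = true) :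
    (p1 Φ t).pi i j = Sum.inr (Φ i j) := by
  cases t with
  | zero =>
    show pi0 Φ i j = _
    unfold pi0
    rw [if_pos ⟨by simpa [p1_zero] using hU, hpos⟩]
  | succ t =>
    rcases p1step_cases Φ (p1 Φ t) with ⟨hZ, hpi⟩ | ⟨hE, hk, he⟩
    · rw [p1_succ, hpi]; rw [p1_succ, hZ] at hU; exact pi_eq_inr_of_mem_Uset hU hpos
    · rw [p1_succ, he] at hU
      rcases pi0_eq_inr_or_inl Φ i j with h0 | h0
      · exact pi_eq_inr_of_le (Nat.zero_le _) h0
      · rw [p1_succ, he, activeOut_pi, if_pos (Or.inr (Or.inr ⟨hU, by rw [h0, hpos]⟩))]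

lemma notMem_Uset_of_pi_eq_inl {Φ : Formula n m k} {t : ℕ} {i : Fin m} {j : Fin k} {b : Bool}
    (h : (p1 Φ t).pi i j = Sum.inl b) (hpos : (Φ i j).2 = true) : i ∉ Uset Φ (p1 Φ t).Z :=
  fun hU => by rw [pi_eq_inr_of_mem_Uset hU hpos] at h; cases h

noncomputable def setVar (Φ : Formula n m k) (i₀ : Fin m) (j₀ : Fin k) (x : Fin n) :
    Formula n m k :=
  fun i j => if i = i₀ ∧ j = j₀ then (x, (Φ i j).2) else Φ i j

section SetVar

variable {Φ : Formula n m k} {i₀ : Fin m} {j₀ : Fin k} {x : Fin n}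

lemma setVar_apply_of_ne {i : Fin m} {j : Fin k} (h : ¬(i = i₀ ∧ j = j₀)) :
    setVar Φ i₀ j₀ x i j = Φ i j :=
  if_neg h

@[simp]
lemma setVar_apply_self : setVar Φ i₀ j₀ x i₀ j₀ = (x, (Φ i₀ j₀).2) :=
  if_pos ⟨rfl, rfl⟩

@[simp]
lemma setVar_sign (i : Fin m) (j : Fin k) : (setVar Φ i₀ j₀ x i j).2 = (Φ i j).2 := by
  unfold setVar; split <;> rfl

lemma setVar_setVar_self : setVar (setVar Φ i₀ j₀ x) i₀ j₀ (Φ i₀ j₀).1 = Φ := by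
  funext i j
  by_cases h : i = i₀ ∧ j = j₀
  · obtain ⟨rfl, rfl⟩ := h; simp
  · rw [setVar_apply_of_ne h, setVar_apply_of_ne h]

section Hidden

variable {W : Finset (Fin n)} (h1 : (Φ i₀ j₀).1 ∉ W) (h2 : x ∉ W)
include h1 h2

lemma var_mem_setVar_iff (i : Fin m) (j : Fin k) :
    (setVar Φ i₀ j₀ x i j).1 ∈ W ↔ (Φ i j).1 ∈ W := by
  by_cases h : i = i₀ ∧ j = j₀
  · obtain ⟨rfl, rfl⟩ := h; simp [h1, h2]
  · rw [setVar_apply_of_ne h]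

lemma Uset_setVar : Uset (setVar Φ i₀ j₀ x) W = Uset Φ W := by
  unfold Uset
  refine filter_congr fun i _ => ?_
  simp only [setVar_sign, var_mem_setVar_iff h1 h2]

lemma stepE_setVar : stepE (setVar Φ i₀ j₀ x) W = stepE Φ W := by
  unfold stepE
  refine filter_congr fun i _ => ?_
  simp only [allNeg, setVar_sign, var_mem_setVar_iff h1 h2]

lemma Ux_setVar (hU : (Φ i₀ j₀).2 = true → i₀ ∉ Uset Φ W) (y : Fin n) :
    Ux (setVar Φ i₀ j₀ x) W y = Ux Φ W y := by
  unfold Ux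
  rw [Uset_setVar h1 h2]
  congr 1
  refine filter_congr fun i hi => exists_congr fun j => ?_
  by_cases h : i = i₀ ∧ j = j₀
  · obtain ⟨rfl, rfl⟩ := h
    have hneg : (Φ i j).2 = false := by simpa using mt hU (not_not.mpr hi)
    simp [Prod.ext_iff, hneg]
  · rw [setVar_apply_of_ne h]

lemma selj_setVar (hU : (Φ i₀ j₀).2 = true → i₀ ∉ Uset Φ W) (hk : 0 < k) {φt : Fin m}
    (hnr : ¬(φt = i₀ ∧ j₀.val < k1 k)) :
    selj hk (setVar Φ i₀ j₀ x) W φt = selj hk Φ W φt := by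
  have hJ : selJ (setVar Φ i₀ j₀ x) W φt = selJ Φ W φt := by
    refine filter_congr fun j _ => and_congr_right fun hj => ?_
    rw [setVar_apply_of_ne (fun h => hnr ⟨h.1, by rw [← h.2]; omega⟩), Ux_setVar h1 h2 hU]
  unfold selj
  simp only [hJ]

end Hidden

lemma pi0_setVar (hnc : ¬(i₀ ∈ Uset Φ ∅ ∧ (Φ i₀ j₀).2 = true)) :
    pi0 (setVar Φ i₀ j₀ x) = pi0 Φ := by
  have hU := Uset_setVar (Φ := Φ) (i₀ := i₀) (j₀ := j₀) (x := x)
    (notMem_empty _) (notMem_empty _)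
  funext i j
  unfold pi0
  rw [hU, setVar_sign]
  by_cases h : i = i₀ ∧ j = j₀
  · obtain ⟨rfl, rfl⟩ := h
    rw [if_neg hnc, if_neg hnc]
  · rw [setVar_apply_of_ne h]

/-- A step does not notice the replacement of a hidden variable unless it reveals the position
as part of the chosen clause `φ_t`. -/
lemma p1step_setVar (st : P1State n m k) (h1 : (Φ i₀ j₀).1 ∉ st.Z) (h2 : x ∉ st.Z)
    (hU : (Φ i₀ j₀).2 = true → i₀ ∉ Uset Φ st.Z)
    (hnc : ¬(i₀ ∈ Uset Φ ∅ ∧ (Φ i₀ j₀).2 = true))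
    (hnr : st.stopped = false → ∀ hE : (stepE Φ st.Z).Nonempty,
      ¬(stepPhi Φ st.Z hE = i₀ ∧ j₀.val < k1 k)) :
    (p1step (setVar Φ i₀ j₀ x) st).Z = (p1step Φ st).Z ∧
    (p1step (setVar Φ i₀ j₀ x) st).lastZ = (p1step Φ st).lastZ ∧
    ((Φ i₀ j₀).1 ∉ (p1step Φ st).Z → x ∉ (p1step Φ st).Z →
      ((Φ i₀ j₀).2 = true → i₀ ∉ Uset Φ (p1step Φ st).Z) →
      p1step (setVar Φ i₀ j₀ x) st = p1step Φ st) := by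
  have hEeq := stepE_setVar (x := x) h1 h2
  by_cases hact : st.stopped = false ∧ (stepE Φ st.Z).Nonempty ∧ 0 < k
  swap
  · rw [p1step_of_not_active _ hact, p1step_of_not_active _ (by rwa [hEeq])]
    exact ⟨rfl, rfl, fun _ _ _ => rfl⟩
  obtain ⟨hs, hE, hk⟩ := hact
  have hE' : (stepE (setVar Φ i₀ j₀ x) st.Z).Nonempty := hEeq ▸ hE
  have hφ : stepPhi (setVar Φ i₀ j₀ x) st.Z hE' = stepPhi Φ st.Z hE := by
    unfold stepPhi; congr 1
  have hz : (setVar Φ i₀ j₀ x (stepPhi Φ st.Z hE)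
        (selj hk (setVar Φ i₀ j₀ x) st.Z (stepPhi Φ st.Z hE))).1 =
      (Φ (stepPhi Φ st.Z hE) (selj hk Φ st.Z (stepPhi Φ st.Z hE))).1 := by
    rw [selj_setVar h1 h2 hU hk (hnr hs hE), setVar_apply_of_ne]
    exact fun h => hnr hs hE ⟨h.1, h.2 ▸ selj_lt_k1 hk Φ _ _⟩
  have hZ : (activeOut (setVar Φ i₀ j₀ x) st hE' hk).Z = (activeOut Φ st hE hk).Z := by
    rw [activeOut_Z, activeOut_Z, hφ, hz]
  have hlastZ :
      (activeOut (setVar Φ i₀ j₀ x) st hE' hk).lastZ = (activeOut Φ st hE hk).lastZ := by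
    rw [activeOut_lastZ, activeOut_lastZ, hφ, hz]
  rw [p1step_of_active _ hs hE' hk, p1step_of_active _ hs hE hk]
  refine ⟨hZ, hlastZ, fun h1' h2' hU' => P1State.ext hZ ?_ (by simp [activeOut, hφ]) hlastZ rfl⟩
  funext i j
  rw [activeOut_pi, activeOut_pi, hZ, hφ, Uset_setVar h1' h2', pi0_setVar (x := x) hnc]
  by_cases h : i = i₀ ∧ j = j₀
  · obtain ⟨rfl, rfl⟩ := h
    have hcond : ∀ y ∉ (activeOut Φ st hE hk).Z, ¬((i = stepPhi Φ st.Z hE ∧ j.val < k1 k) ∨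
        y ∈ (activeOut Φ st hE hk).Z ∨
        (i ∈ Uset Φ (activeOut Φ st hE hk).Z ∧ pi0 Φ i j = Sum.inl true)) := by
      rintro y hy (⟨hi, hj⟩ | hy' | ⟨hu, hp⟩)
      · exact hnr hs hE ⟨hi.symm, hj⟩
      · exact hy hy'
      · exact hU' (sign_eq_of_pi0_eq_inl hp) hu
    rw [setVar_apply_self, if_neg (hcond x h2'), if_neg (hcond _ h1')]
  · rw [setVar_apply_of_ne h]

lemma p1_setVar_of_le {S : ℕ} (hunrev : (p1 Φ S).pi i₀ j₀ = Sum.inl (Φ i₀ j₀).2)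
    (hx : x ∉ (p1 Φ S).Z) {r : ℕ} (hr : r ≤ S) : p1 (setVar Φ i₀ j₀ x) r = p1 Φ r := by
  have hnc : ¬(i₀ ∈ Uset Φ ∅ ∧ (Φ i₀ j₀).2 = true) := fun h =>
    notMem_Uset_of_pi_eq_inl (pi_eq_inl_of_le (Nat.zero_le S) hunrev) h.2 h.1
  induction r with
  | zero => rw [p1_zero, p1_zero, pi0_setVar (x := x) hnc]
  | succ r ih =>
    have hur : ∀ r' ≤ S, (p1 Φ r').pi i₀ j₀ = Sum.inl (Φ i₀ j₀).2 :=
      fun r' hr' => pi_eq_inl_of_le hr' hunrev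
    have hxr : ∀ r' ≤ S, x ∉ (p1 Φ r').Z := fun r' hr' h => hx (Z_mono hr' h)
    have hnr : (p1 Φ r).stopped = false → ∀ hE : (stepE Φ (p1 Φ r).Z).Nonempty,
        ¬(stepPhi Φ (p1 Φ r).Z hE = i₀ ∧ j₀.val < k1 k) := by
      rintro hs hE ⟨hi, hj⟩
      have hrev := hur (r + 1) hr
      rw [p1_succ, p1step_of_active Φ hs hE (Fin.pos j₀), activeOut_pi,
        if_pos (Or.inl ⟨hi.symm, hj⟩)] at hrev
      cases hrev
    have hu := hur r (by omega)
    have hZ' := notMem_Z_of_pi_eq_inl (hur (r + 1) hr)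
    have hU' := notMem_Uset_of_pi_eq_inl (hur (r + 1) hr)
    have hx' := hxr (r + 1) hr
    rw [p1_succ] at hZ' hU' hx'
    rw [p1_succ, p1_succ, ih (by omega)]
    exact (p1step_setVar (p1 Φ r) (notMem_Z_of_pi_eq_inl hu) (hxr r (by omega))
      (notMem_Uset_of_pi_eq_inl hu) hnc hnr).2.2 hZ' hx' hU'

/-- A position `j₀ ≥ k₁` takes no part in the choice of `z_{S+1}`. -/
lemma p1_setVar_succ {S : ℕ} (hunrev : (p1 Φ S).pi i₀ j₀ = Sum.inl (Φ i₀ j₀).2)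
    (hx : x ∉ (p1 Φ S).Z) (hj₀ : k1 k ≤ j₀.val) :
    (p1 (setVar Φ i₀ j₀ x) (S + 1)).Z = (p1 Φ (S + 1)).Z ∧
    (p1 (setVar Φ i₀ j₀ x) (S + 1)).lastZ = (p1 Φ (S + 1)).lastZ := by
  have hnc : ¬(i₀ ∈ Uset Φ ∅ ∧ (Φ i₀ j₀).2 = true) := fun h =>
    notMem_Uset_of_pi_eq_inl (pi_eq_inl_of_le (Nat.zero_le S) hunrev) h.2 h.1
  rw [p1_succ, p1_succ, p1_setVar_of_le hunrev hx le_rfl]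
  obtain ⟨hZ, hlastZ, -⟩ := p1step_setVar (p1 Φ S) (notMem_Z_of_pi_eq_inl hunrev) hx
    (notMem_Uset_of_pi_eq_inl hunrev) hnc (fun _ _ h => absurd h.2 (by omega))
  exact ⟨hZ, hlastZ⟩

end SetVar

lemma eq_of_mem_Uset {Φ : Formula n m k} {W : Finset (Fin n)} {i : Fin m} {j j' : Fin k}
    (hU : i ∈ Uset Φ W) (hj : (Φ i j).2 = true ∧ (Φ i j).1 ∉ W)
    (hj' : (Φ i j').2 = true ∧ (Φ i j').1 ∉ W) : j = j' := by
  have hcard := (mem_filter.mp hU).2.1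
  exact card_le_one.mp hcard.le j (by simpa using hj) j' (by simpa using hj')

lemma exists_mem_Uset_of_pi_eq_inr {Φ : Formula n m k} {i : Fin m} {j : Fin k}
    (hj : k1 k ≤ j.val) {s : ℕ} (hrev : (p1 Φ s).pi i j = Sum.inr (Φ i j))
    (hZ : (Φ i j).1 ∉ (p1 Φ s).Z) :
    ∃ r ≤ s, i ∈ Uset Φ (p1 Φ r).Z ∧ (Φ i j).2 = true := by
  induction s with
  | zero =>
    refine ⟨0, le_rfl, ?_⟩
    change pi0 Φ i j = _ at hrev
    unfold pi0 at hrev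
    split at hrev
    · next h => exact h
    · cases hrev
  | succ s ih =>
    rcases pi_eq_inr_or_inl Φ s i j with h | h
    · obtain ⟨r, hr, hU⟩ := ih h fun h' => hZ (Z_subset_succ Φ s h')
      exact ⟨r, by omega, hU⟩
    rcases p1step_cases Φ (p1 Φ s) with ⟨-, hpi⟩ | ⟨hE, hk, he⟩
    · rw [p1_succ, hpi, h] at hrev; cases hrev
    refine ⟨s + 1, le_rfl, ?_⟩
    rw [p1_succ, he] at hrev hZ ⊢
    rw [activeOut_pi, h] at hrev
    split at hrev
    · next hcause =>
      rcases hcause with ⟨-, hlt⟩ | hmem | ⟨hU, hp⟩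
      · omega
      · exact absurd hmem hZ
      · exact ⟨hU, sign_eq_of_pi0_eq_inl hp⟩
    · cases hrev

noncomputable def entryT (Φ : Formula n m k) (i : Fin m) (j : Fin k) : ℕ :=
  sInf {s | (Φ i j).1 ∈ (p1 Φ s).Z}

def IsClean (Φ : Formula n m k) (i : Fin m) (j : Fin k) : Prop :=
  (p1 Φ (entryT Φ i j - 1)).pi i j = Sum.inl (Φ i j).2

lemma notMem_Z_of_lt_entryT {Φ : Formula n m k} {i : Fin m} {j : Fin k} {r : ℕ}
    (h : r < entryT Φ i j) : (Φ i j).1 ∉ (p1 Φ r).Z :=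
  Nat.notMem_of_lt_sInf h

lemma entryT_spec {Φ : Formula n m k} {t : ℕ} {i : Fin m} {j : Fin k}
    (h : (Φ i j).1 ∈ (p1 Φ t).Z) :
    1 ≤ entryT Φ i j ∧ entryT Φ i j ≤ t ∧
      (p1 Φ (entryT Φ i j)).lastZ = some (Φ i j).1 := by
  have hmem : (Φ i j).1 ∈ (p1 Φ (entryT Φ i j)).Z :=
    Nat.sInf_mem (s := {s | (Φ i j).1 ∈ (p1 Φ s).Z}) ⟨t, h⟩
  have hle : entryT Φ i j ≤ t := Nat.sInf_le (s := {s | (Φ i j).1 ∈ (p1 Φ s).Z}) h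
  obtain ⟨e, he⟩ : ∃ e, entryT Φ i j = e + 1 := by
    cases h0 : entryT Φ i j with
    | zero => rw [h0] at hmem; simp [p1_zero] at hmem
    | succ e => exact ⟨e, rfl⟩
  have hnot : (Φ i j).1 ∉ (p1 Φ e).Z := notMem_Z_of_lt_entryT (by omega)
  refine ⟨by omega, hle, ?_⟩
  rw [he, p1_succ] at hmem ⊢
  rcases p1step_cases Φ (p1 Φ e) with ⟨hZ, -⟩ | ⟨hE, hk, heq⟩
  · rw [hZ] at hmem; exact absurd hmem hnot
  · rw [heq] at hmem ⊢
    rw [activeOut_Z, mem_insert] at hmem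
    rw [activeOut_lastZ, hmem.resolve_right hnot]

lemma exists_mem_Uset_of_not_isClean {Φ : Formula n m k} {t : ℕ} {i : Fin m} {j : Fin k}
    (hj : k1 k ≤ j.val) (hm : (Φ i j).1 ∈ (p1 Φ t).Z) (hnc : ¬IsClean Φ i j) :
    ∃ r < entryT Φ i j, i ∈ Uset Φ (p1 Φ r).Z ∧ (Φ i j).2 = true := by
  have he := (entryT_spec hm).1
  have hrev := (pi_eq_inr_or_inl Φ (entryT Φ i j - 1) i j).resolve_right hnc
  obtain ⟨r, hr, hU⟩ :=
    exists_mem_Uset_of_pi_eq_inr hj hrev (notMem_Z_of_lt_entryT (by omega))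
  exact ⟨r, by omega, hU⟩

/-- A non-clean position was revealed as the single free positive literal of a unique
clause. -/
lemma eq_of_not_isClean {Φ : Formula n m k} {t : ℕ} {i : Fin m} {j j' : Fin k}
    (hj : k1 k ≤ j.val) (hj' : k1 k ≤ j'.val)
    (hm : (Φ i j).1 ∈ (p1 Φ t).Z) (hm' : (Φ i j').1 ∈ (p1 Φ t).Z)
    (hnc : ¬IsClean Φ i j) (hnc' : ¬IsClean Φ i j') : j = j' := by
  obtain ⟨r, hr, hU, hs⟩ := exists_mem_Uset_of_not_isClean hj hm hnc
  obtain ⟨r', hr', hU', hs'⟩ := exists_mem_Uset_of_not_isClean hj' hm' hnc'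
  rcases le_total r r' with hrr | hrr
  · exact eq_of_mem_Uset hU ⟨hs, notMem_Z_of_lt_entryT hr⟩
      ⟨hs', notMem_Z_of_lt_entryT (by omega)⟩
  · exact (eq_of_mem_Uset hU' ⟨hs', notMem_Z_of_lt_entryT hr'⟩
      ⟨hs, notMem_Z_of_lt_entryT (by omega)⟩).symm

/-- Marks `((i, j), s)` are positions tagged with the step `s` at which their variable
enters `Z`. -/
noncomputable def markedEvent (n T : ℕ) (P : Finset ((Fin m × Fin k) × Fin (T + 1))) :
    Finset (Formula n m k) :=
  univ.filter fun Φ => ∀ q ∈ P,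
    (p1 Φ (q.2.val - 1)).pi q.1.1 q.1.2 = Sum.inl (Φ q.1.1 q.1.2).2 ∧
      (p1 Φ q.2.val).lastZ = some (Φ q.1.1 q.1.2).1

lemma mem_markedEvent {T : ℕ} {P : Finset ((Fin m × Fin k) × Fin (T + 1))}
    {Φ : Formula n m k} :
    Φ ∈ markedEvent n T P ↔ ∀ q ∈ P,
      (p1 Φ (q.2.val - 1)).pi q.1.1 q.1.2 = Sum.inl (Φ q.1.1 q.1.2).2 ∧
        (p1 Φ q.2.val).lastZ = some (Φ q.1.1 q.1.2).1 := by
  simp [markedEvent]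

section DropLatestMark

variable {T : ℕ} {P : Finset ((Fin m × Fin k) × Fin (T + 1))} {i₀ : Fin m} {j₀ : Fin k}
  {s : Fin (T + 1)}

lemma p1_setVar_of_mem_markedEvent (hs : 1 ≤ s.val) (hj₀ : k1 k ≤ j₀.val)
    {Φ : Formula n m k} (hΦ : Φ ∈ markedEvent n T (insert ((i₀, j₀), s) P)) {x : Fin n}
    (hx : x ∉ (p1 Φ (s.val - 1)).Z) :
    (∀ r ≤ s.val - 1, p1 (setVar Φ i₀ j₀ x) r = p1 Φ r) ∧
      (p1 (setVar Φ i₀ j₀ x) s.val).lastZ = some (Φ i₀ j₀).1 := by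
  obtain ⟨hunrev, hlastZ⟩ := mem_markedEvent.mp hΦ _ (mem_insert_self _ _)
  refine ⟨fun r hr => p1_setVar_of_le hunrev hx hr, ?_⟩
  have := (p1_setVar_succ hunrev hx hj₀).2
  rwa [Nat.sub_add_cancel hs, hlastZ] at this

lemma setVar_mem_markedEvent (hs : 1 ≤ s.val) (hj₀ : k1 k ≤ j₀.val)
    (hmax : ∀ q ∈ P, q.2 ≤ s) (hpos : ∀ q ∈ P, q.1 ≠ (i₀, j₀))
    {Φ : Formula n m k} (hΦ : Φ ∈ markedEvent n T (insert ((i₀, j₀), s) P)) {x : Fin n}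
    (hx : x ∉ (p1 Φ (s.val - 1)).Z) :
    setVar Φ i₀ j₀ x ∈ markedEvent n T P := by
  obtain ⟨hhist, hlastZ⟩ := p1_setVar_of_mem_markedEvent hs hj₀ hΦ hx
  refine mem_markedEvent.mpr fun q hq => ?_
  have hq' := mem_markedEvent.mp hΦ q (mem_insert_of_mem hq)
  have hqs : q.2.val ≤ s.val := hmax q hq
  have hne : ¬(q.1.1 = i₀ ∧ q.1.2 = j₀) := fun h => hpos q hq (Prod.ext h.1 h.2)
  simp only [setVar_apply_of_ne hne]
  refine ⟨by rw [hhist _ (by omega)]; exact hq'.1, ?_⟩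
  rcases Nat.lt_or_ge q.2.val s.val with hlt | hge
  · rw [hhist _ (by omega)]; exact hq'.2
  · rw [show q.2.val = s.val by omega] at hq' ⊢
    rw [hlastZ, (mem_markedEvent.mp hΦ _ (mem_insert_self _ _)).2.symm.trans hq'.2]

/-- The original variable is recovered as the one chosen at step `s`. -/
lemma injOn_setVar_markedEvent (hs : 1 ≤ s.val) (hj₀ : k1 k ≤ j₀.val) :
    Set.InjOn (fun p : (_ : Formula n m k) × Fin n => setVar p.1 i₀ j₀ p.2)
      ((markedEvent n T (insert ((i₀, j₀), s) P)).sigma fun Φ => (p1 Φ (s.val - 1)).Zᶜ) := by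
  rintro ⟨Φ, x⟩ hp ⟨Φ', x'⟩ hp' heq
  simp only [coe_sigma, Set.mem_sigma_iff, mem_coe, mem_compl] at hp hp' heq
  have hvar : (Φ i₀ j₀).1 = (Φ' i₀ j₀).1 := by
    have h := (p1_setVar_of_mem_markedEvent hs hj₀ hp.1 hp.2).2
    rw [heq, (p1_setVar_of_mem_markedEvent hs hj₀ hp'.1 hp'.2).2] at h
    exact (Option.some_inj.mp h).symm
  have hΦ : Φ = Φ' := by
    rw [← setVar_setVar_self (Φ := Φ) (x := x), heq, hvar, setVar_setVar_self]
  subst hΦ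
  have hx : x = x' := by simpa using congrFun (congrFun heq i₀) j₀
  rw [hx]

/-- The variable of the mark with the latest step can be replaced by any of the `≥ n - T`
variables outside `Z_{s-1}`. -/
lemma card_markedEvent_insert_mul_le (hs : 1 ≤ s.val) (hj₀ : k1 k ≤ j₀.val)
    (hmax : ∀ q ∈ P, q.2 ≤ s) (hpos : ∀ q ∈ P, q.1 ≠ (i₀, j₀)) :
    #(markedEvent n T (insert ((i₀, j₀), s) P)) * (n - T) ≤ #(markedEvent n T P) := by
  set E := markedEvent n T (insert ((i₀, j₀), s) P)
  have hfree : ∀ Φ : Formula n m k, n - T ≤ #(p1 Φ (s.val - 1)).Zᶜ := by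
    intro Φ
    rw [card_compl, Fintype.card_fin]
    have := card_Z_le Φ (s.val - 1)
    have := s.isLt
    omega
  calc #E * (n - T) ≤ #(E.sigma fun Φ => (p1 Φ (s.val - 1)).Zᶜ) := by
        rw [card_sigma, ← smul_eq_mul]
        exact card_nsmul_le_sum _ _ _ fun Φ _ => hfree Φ
    _ ≤ #(markedEvent n T P) := by
      refine card_le_card_of_injOn _ (fun p hp => ?_) (injOn_setVar_markedEvent hs hj₀)
      simp only [coe_sigma, Set.mem_sigma_iff, mem_coe, mem_compl] at hp
      exact setVar_mem_markedEvent hs hj₀ hmax hpos hp.1 hp.2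

end DropLatestMark

lemma card_markedEvent_mul_pow_le {T : ℕ} (P : Finset ((Fin m × Fin k) × Fin (T + 1)))
    (hP : ∀ q ∈ P, 1 ≤ q.2.val ∧ k1 k ≤ q.1.2.val)
    (hinj : Set.InjOn Prod.fst (P : Set ((Fin m × Fin k) × Fin (T + 1)))) :
    #(markedEvent n T P) * (n - T) ^ #P ≤ Fintype.card (Formula n m k) := by
  revert hP hinj
  refine Finset.induction_on_max_value (fun q : (Fin m × Fin k) × Fin (T + 1) => q.2) P
    (fun _ _ => by simp [markedEvent]) ?_
  rintro ⟨⟨i₀, j₀⟩, s⟩ P hq hmax ih hP hinj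
  have hpos : ∀ q ∈ P, q.1 ≠ (i₀, j₀) := fun q hqP h =>
    hq (by rwa [← hinj (mem_insert_of_mem hqP) (mem_insert_self _ _) h])
  have hP' := hP _ (mem_insert_self _ _)
  rw [card_insert_of_notMem hq, pow_succ', ← mul_assoc]
  calc #(markedEvent n T (insert ((i₀, j₀), s) P)) * (n - T) * (n - T) ^ #P
      ≤ #(markedEvent n T P) * (n - T) ^ #P :=
        Nat.mul_le_mul_right _ (card_markedEvent_insert_mul_le hP'.1 hP'.2 hmax hpos)
    _ ≤ Fintype.card (Formula n m k) :=
        ih (fun q hqP => hP q (mem_insert_of_mem hqP))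
          (hinj.mono (by simp [Set.subset_insert]))

noncomputable def lateInZ (Φ : Formula n m k) (t : ℕ) (i : Fin m) : Finset (Fin k) :=
  univ.filter fun j => k1 k ≤ j.val ∧ (Φ i j).1 ∈ (p1 Φ t).Z

noncomputable def witnesses (m k N K T : ℕ) :
    Finset (Finset (Fin m) × (Fin m → Finset (Fin k × Fin (T + 1)))) :=
  univ.filter fun w => #w.1 = N ∧ (∀ i ∉ w.1, w.2 i = ∅) ∧
    ∀ i ∈ w.1, #(w.2 i) = K ∧ (∀ p ∈ w.2 i, k1 k ≤ p.1.val ∧ 1 ≤ p.2.val) ∧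
      Set.InjOn Prod.fst (w.2 i : Set (Fin k × Fin (T + 1)))

noncomputable def marks {T : ℕ} (w : Finset (Fin m) × (Fin m → Finset (Fin k × Fin (T + 1)))) :
    Finset ((Fin m × Fin k) × Fin (T + 1)) :=
  w.1.biUnion fun i => (w.2 i).image fun p => ((i, p.1), p.2)

lemma mem_marks {T : ℕ} {w : Finset (Fin m) × (Fin m → Finset (Fin k × Fin (T + 1)))}
    {q : (Fin m × Fin k) × Fin (T + 1)} :
    q ∈ marks w ↔ q.1.1 ∈ w.1 ∧ (q.1.2, q.2) ∈ w.2 q.1.1 := by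
  constructor
  · simp only [marks, mem_biUnion, mem_image]
    rintro ⟨i, hi, p, hp, rfl⟩
    exact ⟨hi, hp⟩
  · rintro ⟨hi, hp⟩
    exact mem_biUnion.mpr ⟨_, hi, mem_image.mpr ⟨_, hp, rfl⟩⟩

lemma card_marks {N K T : ℕ} {w : Finset (Fin m) × (Fin m → Finset (Fin k × Fin (T + 1)))}
    (hw : w ∈ witnesses m k N K T) : #(marks w) = N * K := by
  obtain ⟨hN, -, hcl⟩ := (mem_filter.mp hw).2
  rw [marks, card_biUnion]
  · rw [sum_congr rfl fun i hi => ?_, sum_const, hN, smul_eq_mul]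
    rw [card_image_of_injective _ fun p p' h => by simpa [Prod.ext_iff] using h, (hcl i hi).1]
  · intro i _ i' _ hii'
    simp only [Function.onFun, disjoint_left, mem_image]
    rintro _ ⟨p, -, rfl⟩ ⟨p', -, h⟩
    exact hii' (congrArg (·.1.1) h).symm

lemma marks_spec {N K T : ℕ} {w : Finset (Fin m) × (Fin m → Finset (Fin k × Fin (T + 1)))}
    (hw : w ∈ witnesses m k N K T) :
    (∀ q ∈ marks w, 1 ≤ q.2.val ∧ k1 k ≤ q.1.2.val) ∧
      Set.InjOn Prod.fst (marks w : Set ((Fin m × Fin k) × Fin (T + 1))) := by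
  obtain ⟨-, -, hcl⟩ := (mem_filter.mp hw).2
  refine ⟨fun q hq => ?_, fun q hq q' hq' h => ?_⟩
  · obtain ⟨hi, hp⟩ := mem_marks.mp hq
    exact ((hcl _ hi).2.1 _ hp).symm
  · obtain ⟨hi, hp⟩ := mem_marks.mp hq
    obtain ⟨-, hp'⟩ := mem_marks.mp hq'
    rw [← h] at hp'
    exact Prod.ext h (Prod.ext_iff.mp ((hcl _ hi).2.2 hp hp' rfl)).2

lemma card_witnesses_le (N K T : ℕ) :
    #(witnesses m k N K T) ≤ m.choose N * ((k * (T + 1)).choose K) ^ N := by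
  set S := (univ.powersetCard N).sigma fun I : Finset (Fin m) =>
    I.pi fun _ => (univ : Finset (Fin k × Fin (T + 1))).powersetCard K
  have hsub : witnesses m k N K T ⊆
      S.image fun p => (p.1, fun i => if h : i ∈ p.1 then p.2 i h else ∅) := by
    intro w hw
    obtain ⟨hN, hout, hcl⟩ := (mem_filter.mp hw).2
    refine mem_image.mpr ⟨⟨w.1, fun i _ => w.2 i⟩, ?_, ?_⟩
    · exact mem_sigma.mpr ⟨mem_powersetCard.mpr ⟨subset_univ _, hN⟩,
        mem_pi.mpr fun i hi => mem_powersetCard.mpr ⟨subset_univ _, (hcl i hi).1⟩⟩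
    · refine Prod.ext rfl (funext fun i => ?_)
      by_cases hi : i ∈ w.1
      · simp [hi]
      · simp [hi, hout i hi]
  calc #(witnesses m k N K T) ≤ #S := (card_le_card hsub).trans card_image_le
    _ = m.choose N * ((k * (T + 1)).choose K) ^ N := by
      rw [card_sigma, sum_congr rfl fun I hI => by
        rw [card_pi, prod_const, card_powersetCard, card_univ, Fintype.card_prod,
          Fintype.card_fin, Fintype.card_fin, (mem_powersetCard.mp hI).2]]
      rw [sum_const, card_powersetCard, card_univ, Fintype.card_fin, smul_eq_mul]

lemma exists_clean_subset {Φ : Formula n m k} {t K : ℕ} {i : Fin m}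
    (hK : K ≤ #(lateInZ Φ t i)) :
    ∃ J ⊆ (lateInZ Φ t i).filter (IsClean Φ i), #J = K - 1 := by
  have hsplit := card_filter_add_card_filter_not (s := lateInZ Φ t i) (IsClean Φ i)
  have hdirty : #((lateInZ Φ t i).filter fun j => ¬IsClean Φ i j) ≤ 1 := by
    refine card_le_one.mpr fun a ha b hb => ?_
    simp only [lateInZ, mem_filter, mem_univ, true_and] at ha hb
    exact eq_of_not_isClean ha.1.1 hb.1.1 ha.1.2 hb.1.2 ha.2 hb.2
  exact exists_subset_card_eq (by omega)

noncomputable def entryMarks (Φ : Formula n m k) (T : ℕ) (i : Fin m) (J : Finset (Fin k)) :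
    Finset (Fin k × Fin (T + 1)) :=
  J.image fun j => (j, ⟨min (entryT Φ i j) T, Nat.lt_succ_of_le (min_le_right _ _)⟩)

lemma entryMarks_spec {Φ : Formula n m k} {t T : ℕ} (htT : t ≤ T) {i : Fin m}
    {J : Finset (Fin k)} (hJ : J ⊆ (lateInZ Φ t i).filter (IsClean Φ i)) :
    #(entryMarks Φ T i J) = #J ∧
      (∀ p ∈ entryMarks Φ T i J, (k1 k ≤ p.1.val ∧ 1 ≤ p.2.val) ∧
        (p1 Φ (p.2.val - 1)).pi i p.1 = Sum.inl (Φ i p.1).2 ∧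
        (p1 Φ p.2.val).lastZ = some (Φ i p.1).1) ∧
      Set.InjOn Prod.fst (entryMarks Φ T i J : Set (Fin k × Fin (T + 1))) := by
  refine ⟨card_image_of_injective _ fun j j' h => congrArg Prod.fst h, ?_, ?_⟩
  · simp only [entryMarks, mem_image]
    rintro _ ⟨j, hj, rfl⟩
    have hj := hJ hj
    simp only [lateInZ, mem_filter, mem_univ, true_and] at hj
    obtain ⟨h1, h2, h3⟩ := entryT_spec hj.1.2
    have hmin : min (entryT Φ i j) T = entryT Φ i j := min_eq_left (by omega)
    simp only [hmin]
    exact ⟨⟨hj.1.1, h1⟩, hj.2, h3⟩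
  · simp only [entryMarks, coe_image]
    rintro _ ⟨j, -, rfl⟩ _ ⟨j', -, rfl⟩ h
    simp only at h
    rw [h]

/-- Mark the clean positions at their entry times. -/
lemma exists_witness {T t N K : ℕ} (htT : t ≤ T) {Φ : Formula n m k}
    (hbad : N ≤ #(univ.filter fun i => K ≤ #(lateInZ Φ t i))) :
    ∃ w ∈ witnesses m k N (K - 1) T, Φ ∈ markedEvent n T (marks w) := by
  obtain ⟨I, hI, hIcard⟩ := exists_subset_card_eq hbad
  have hsel : ∀ i, ∃ J : Finset (Fin k),
      i ∈ I → J ⊆ (lateInZ Φ t i).filter (IsClean Φ i) ∧ #J = K - 1 := by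
    intro i
    by_cases hi : i ∈ I
    · obtain ⟨J, hJ⟩ := exists_clean_subset (mem_filter.mp (hI hi)).2
      exact ⟨J, fun _ => hJ⟩
    · exact ⟨∅, fun h => absurd h hi⟩
  choose J hJ using hsel
  refine ⟨(I, fun i => if i ∈ I then entryMarks Φ T i (J i) else ∅), ?_, ?_⟩
  · refine mem_filter.mpr ⟨mem_univ _, hIcard, fun i hi => if_neg hi, fun i hi => ?_⟩
    obtain ⟨hcard, hmarks, hinj⟩ := entryMarks_spec htT (hJ i hi).1
    simp only [if_pos hi]
    exact ⟨hcard.trans (hJ i hi).2, fun p hp => (hmarks p hp).1, hinj⟩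
  · refine mem_markedEvent.mpr fun q hq => ?_
    obtain ⟨hi, hq⟩ := mem_marks.mp hq
    simp only [if_pos hi] at hq
    exact ((entryMarks_spec htT (hJ _ hi).1).2.1 _ hq).2

lemma card_heavy_mul_pow_le {T t N K : ℕ} (htT : t ≤ T) :
    #(univ.filter fun Φ : Formula n m k => N ≤ #(univ.filter fun i => K ≤ #(lateInZ Φ t i))) *
        (n - T) ^ (N * (K - 1)) ≤
      m.choose N * ((k * (T + 1)).choose (K - 1)) ^ N * Fintype.card (Formula n m k) := by
  set W := witnesses m k N (K - 1) T
  have hsub : (univ.filter fun Φ : Formula n m k =>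
      N ≤ #(univ.filter fun i => K ≤ #(lateInZ Φ t i))) ⊆
        W.biUnion fun w => markedEvent n T (marks w) := by
    intro Φ hΦ
    obtain ⟨w, hw, hΦw⟩ := exists_witness htT (mem_filter.mp hΦ).2
    exact mem_biUnion.mpr ⟨w, hw, hΦw⟩
  have hevent : ∀ w ∈ W, #(markedEvent n T (marks w)) * (n - T) ^ (N * (K - 1)) ≤
      Fintype.card (Formula n m k) := fun w hw => by
    rw [← card_marks hw]
    exact card_markedEvent_mul_pow_le _ (marks_spec hw).1 (marks_spec hw).2
  calc _ ≤ (∑ w ∈ W, #(markedEvent n T (marks w))) * (n - T) ^ (N * (K - 1)) :=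
        Nat.mul_le_mul_right _ ((card_le_card hsub).trans card_biUnion_le)
    _ ≤ ∑ _w ∈ W, Fintype.card (Formula n m k) := by
        rw [sum_mul]; exact sum_le_sum hevent
    _ ≤ _ := by
        rw [sum_const, smul_eq_mul]
        exact Nat.mul_le_mul_right _ (card_witnesses_le N (K - 1) T)

open Real

lemma choose_le_exp_mul_div_pow (a b : ℕ) :
    (a.choose b : ℝ) ≤ (exp 1 * a / b) ^ b := by
  rcases Nat.eq_zero_or_pos b with rfl | hb
  · simp
  have hbR : (0 : ℝ) < b := Nat.cast_pos.mpr hb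
  have hfact : (0 : ℝ) < b.factorial := Nat.cast_pos.mpr b.factorial_pos
  calc (a.choose b : ℝ) ≤ (a : ℝ) ^ b / b.factorial := Nat.choose_le_pow_div b a
    _ = ((b : ℝ) ^ b / b.factorial) * a ^ b / b ^ b := by field_simp
    _ ≤ exp b * a ^ b / b ^ b := by gcongr; exact pow_div_factorial_le_exp (hx := hbR.le) (n := b)
    _ = (exp 1 * a / b) ^ b := by rw [div_pow, mul_pow, ← exp_nat_mul, mul_one]

lemma div_four_le_natCast_iff (k c : ℕ) : (k : ℝ) / 4 ≤ c ↔ (k + 3) / 4 ≤ c := by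
  rw [div_le_iff₀ (by norm_num : (0 : ℝ) < 4)]
  constructor
  · intro h
    have : k ≤ c * 4 := by exact_mod_cast h
    omega
  · intro h
    have : k ≤ c * 4 := by omega
    exact_mod_cast this

lemma one_sub_Pr_le [Nonempty (Formula n m k)] {A : Set (Formula n m k)}
    {B : Finset (Formula n m k)} (hB : ∀ Φ, Φ ∉ A → Φ ∈ B) :
    1 - Pr n m k A ≤ #B / Fintype.card (Formula n m k) := by
  have hcard : (0 : ℝ) < Fintype.card (Formula n m k) := Nat.cast_pos.mpr Fintype.card_pos
  have hcover : Fintype.card (Formula n m k) ≤ #(univ.filter (· ∈ A)) + #B := by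
    rw [← card_univ]
    refine (card_le_card fun Φ _ => ?_).trans (card_union_le _ _)
    by_cases hΦ : Φ ∈ A
    · exact mem_union_left _ (mem_filter.mpr ⟨mem_univ _, hΦ⟩)
    · exact mem_union_right _ (hB Φ hΦ)
  have hcover' : (Fintype.card (Formula n m k) : ℝ) ≤ #(univ.filter (· ∈ A)) + #B := by
    exact_mod_cast hcover
  rw [Pr, card_univ, sub_le_iff_le_add, ← add_div, le_div_iff₀ hcard, one_mul]
  linarith

lemma eventually_log_le : ∀ᶠ k : ℕ in atTop, 8 ≤ k ∧ 128 * exp 33 * log k ≤ k := by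
  have hc : (0 : ℝ) < 128 * exp 33 := by positivity
  have hlog :=
    tendsto_natCast_atTop_atTop.eventually (isLittleO_log_id_atTop.bound (inv_pos.mpr hc))
  filter_upwards [hlog, eventually_ge_atTop 8] with k hk hk8
  refine ⟨hk8, ?_⟩
  have hk0 : (0 : ℝ) ≤ k := Nat.cast_nonneg k
  rw [norm_of_nonneg (log_natCast_nonneg k), id, norm_of_nonneg hk0] at hk
  calc 128 * exp 33 * log k ≤ 128 * exp 33 * ((128 * exp 33)⁻¹ * k) := by gcongr
    _ = k := by field_simp

lemma mOf_le {ε : ℝ} (hε0 : 0 ≤ ε) (hε1 : ε ≤ 1) (k n : ℕ) : (mOf ε k n : ℝ) ≤ exp k * n := by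
  have hlog : log k / k ≤ 1 := by
    rcases Nat.eq_zero_or_pos k with rfl | hk
    · simp
    have := log_le_sub_one_of_pos (Nat.cast_pos.mpr hk)
    rw [div_le_one (Nat.cast_pos.mpr hk)]
    linarith
  have h2k : (2 : ℝ) ^ k ≤ exp k := by
    rw [← exp_one_pow]
    exact pow_le_pow_left₀ (by norm_num) (by linarith [add_one_le_exp (1 : ℝ)]) k
  calc (mOf ε k n : ℝ) ≤ (1 - ε) * 2 ^ k * log k / k * n :=
        Nat.floor_le (mul_nonneg (div_nonneg (mul_nonneg (mul_nonneg (by linarith)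
          (by positivity)) (log_natCast_nonneg k)) (Nat.cast_nonneg _)) (Nat.cast_nonneg _))
    _ = (1 - ε) * 2 ^ k * (log k / k) * n := by ring
    _ ≤ 1 * 2 ^ k * 1 * n := by gcongr; linarith
    _ ≤ exp k * n := by rw [one_mul, mul_one]; gcongr

lemma log_omOf_le {ε : ℝ} (hε0 : 0 ≤ ε) (hε1 : ε < 1) {k : ℕ} (hk : 1 < k) :
    log (omOf ε k) ≤ log k := by
  have hlogk : 0 < log (k : ℝ) := log_pos (by exact_mod_cast hk)
  have hom : 0 < omOf ε k := mul_pos (by linarith) hlogk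
  have := log_le_sub_one_of_pos hom
  have : omOf ε k ≤ log k := by unfold omOf; nlinarith
  linarith

lemma natCast_mul_thetaOf_le {ε : ℝ} {k n : ℕ} (hT : 1 ≤ thetaOf ε k n) :
    (k : ℝ) * thetaOf ε k n ≤ 4 * n * log (omOf ε k) := by
  have hx := Nat.one_le_floor_iff _ |>.mp hT
  have hk : (0 : ℝ) < k := by
    rcases Nat.eq_zero_or_pos k with rfl | hk
    · simp at hx; linarith
    · exact Nat.cast_pos.mpr hk
  have hle := Nat.floor_le (zero_le_one.trans hx)
  calc (k : ℝ) * thetaOf ε k n ≤ k * (4 * n / k * log (omOf ε k)) := by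
        unfold thetaOf; gcongr
    _ = 4 * n * log (omOf ε k) := by field_simp

lemma eight_mul_log_le {k : ℕ} (hklog : 128 * exp 33 * log k ≤ k) : 8 * log k ≤ (k : ℝ) := by
  have : (8 : ℝ) ≤ 128 * exp 33 := by nlinarith [add_one_le_exp (33 : ℝ)]
  nlinarith [log_natCast_nonneg k]

lemma thetaOf_le_half {ε : ℝ} (hε0 : 0 ≤ ε) (hε1 : ε < 1) {k n : ℕ} (hk8 : 8 ≤ k)
    (hklog : 128 * exp 33 * log k ≤ k) (hT : 1 ≤ thetaOf ε k n) :
    (thetaOf ε k n : ℝ) ≤ n / 2 := by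
  have hkT := natCast_mul_thetaOf_le hT
  have hL := log_omOf_le hε0 hε1 (by omega : 1 < k)
  have h8log := eight_mul_log_le hklog
  have hkR : (8 : ℝ) ≤ k := by exact_mod_cast hk8
  have hn : (0 : ℝ) ≤ n := Nat.cast_nonneg n
  nlinarith [log_natCast_nonneg k]

lemma exp_one_mul_mOf_div_le {ε : ℝ} (hε0 : 0 ≤ ε) (hε1 : ε ≤ 1) {k n N : ℕ}
    (hN : n * exp (-k) ≤ N) (hN0 : 0 < N) :
    exp 1 * (mOf ε k n : ℝ) / N ≤ exp (2 * k + 1) := by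
  rw [div_le_iff₀ (Nat.cast_pos.mpr hN0)]
  calc exp 1 * (mOf ε k n : ℝ) ≤ exp 1 * (exp k * n) := by gcongr; exact mOf_le hε0 hε1 k n
    _ = exp (2 * k + 1) * (n * exp (-k)) := by
        rw [show (2 * k + 1 : ℝ) = 1 + k + k by ring, exp_add, exp_add, exp_neg]
        field_simp
    _ ≤ exp (2 * k + 1) * N := by gcongr

lemma exp_one_mul_div_le {ε : ℝ} (hε0 : 0 ≤ ε) (hε1 : ε < 1) {k n : ℕ} (hk8 : 8 ≤ k)
    (hklog : 128 * exp 33 * log k ≤ k) (hT : 1 ≤ thetaOf ε k n) :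
    exp 1 * ((k * (thetaOf ε k n + 1) : ℕ) : ℝ) / ((k + 3) / 4 - 1 : ℕ) ≤
      exp (-32) * ((n - thetaOf ε k n : ℕ) : ℝ) := by
  set T := thetaOf ε k n
  set K := (k + 3) / 4 - 1
  have hK : (k : ℝ) ≤ 8 * K := by
    have : k ≤ 8 * K := by omega
    exact_mod_cast this
  have hL := log_omOf_le hε0 hε1 (by omega : 1 < k)
  have hkT : (k : ℝ) * T ≤ 4 * n * log (omOf ε k) := natCast_mul_thetaOf_le hT
  have hT1 : (1 : ℝ) ≤ T := by exact_mod_cast hT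
  have hTn : (T : ℝ) ≤ n / 2 := thetaOf_le_half hε0 hε1 hk8 hklog hT
  have hkR : (8 : ℝ) ≤ k := by exact_mod_cast hk8
  have hTn' : T ≤ n := by exact_mod_cast (by linarith : (T : ℝ) ≤ n)
  rw [div_le_iff₀ (Nat.cast_pos.mpr (by omega)), Nat.cast_sub hTn']
  have hexp : exp 1 = exp (-32) * exp 33 := by rw [← exp_add]; norm_num
  have hkT1 : ((k * (T + 1) : ℕ) : ℝ) ≤ 8 * n * log k := by
    push_cast; nlinarith
  have hnK : (n : ℝ) / 16 * k ≤ (n - T) * K := by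
    nlinarith [mul_nonneg (by linarith : (0 : ℝ) ≤ n - T - n / 2) (by linarith : (0 : ℝ) ≤ k),
      mul_nonneg (by linarith : (0 : ℝ) ≤ n - T) (by linarith : (0 : ℝ) ≤ 8 * K - k)]
  calc exp 1 * ((k * (T + 1) : ℕ) : ℝ) ≤ exp 1 * (8 * n * log k) := by gcongr
    _ = exp (-32) * (n / 16 * (128 * exp 33 * log k)) := by rw [hexp]; ring
    _ ≤ exp (-32) * (n / 16 * k) := by gcongr
    _ ≤ exp (-32) * (n - T) * K := by rw [mul_assoc]; gcongr

/-- Per witness clause, the factor `e m / N` from choosing the clause is beaten by the factor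
`(e k (θ + 1) / (K - 1)) ^ (K - 1) ≤ (e ^ (-32) (n - θ)) ^ (K - 1)` from choosing its marks. -/
lemma choose_mul_choose_pow_le {ε : ℝ} (hε0 : 0 < ε) (hε1 : ε < 1) {k n N : ℕ} (hk8 : 8 ≤ k)
    (hklog : 128 * exp 33 * log k ≤ k) (hT : 1 ≤ thetaOf ε k n) (hN : n * exp (-k) ≤ N)
    (hN0 : 0 < N) :
    ((mOf ε k n).choose N : ℝ) * ((k * (thetaOf ε k n + 1)).choose ((k + 3) / 4 - 1) : ℝ) ^ N ≤
      exp (-k * N) * ((n - thetaOf ε k n : ℕ) : ℝ) ^ (N * ((k + 3) / 4 - 1)) := by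
  set T := thetaOf ε k n
  set K := (k + 3) / 4 - 1
  have hK : (k : ℝ) ≤ 8 * K := by
    have : k ≤ 8 * K := by omega
    exact_mod_cast this
  have hkR : (8 : ℝ) ≤ k := by exact_mod_cast hk8
  have hfactor : exp 1 * (mOf ε k n : ℝ) / N * (exp 1 * ((k * (T + 1) : ℕ) : ℝ) / K) ^ K ≤
      exp (-k) * ((n - T : ℕ) : ℝ) ^ K := by
    calc _ ≤ exp (2 * k + 1) * (exp (-32) * ((n - T : ℕ) : ℝ)) ^ K := by
          gcongr
          · exact exp_one_mul_mOf_div_le hε0.le hε1.le hN hN0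
          · exact exp_one_mul_div_le hε0.le hε1 hk8 hklog hT
      _ = exp (2 * k + 1 - 32 * K) * ((n - T : ℕ) : ℝ) ^ K := by
          rw [mul_pow, ← exp_nat_mul, ← mul_assoc, ← exp_add]; ring_nf
      _ ≤ exp (-k) * ((n - T : ℕ) : ℝ) ^ K := by gcongr; linarith
  calc ((mOf ε k n).choose N : ℝ) * ((k * (T + 1)).choose K : ℝ) ^ N
      ≤ (exp 1 * (mOf ε k n : ℝ) / N) ^ N * ((exp 1 * ((k * (T + 1) : ℕ) : ℝ) / K) ^ K) ^ N := by
        gcongr <;> exact choose_le_exp_mul_div_pow _ _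
    _ = (exp 1 * (mOf ε k n : ℝ) / N * (exp 1 * ((k * (T + 1) : ℕ) : ℝ) / K) ^ K) ^ N := by
        rw [mul_pow]
    _ ≤ (exp (-k) * ((n - T : ℕ) : ℝ) ^ K) ^ N := by gcongr
    _ = exp (-k * N) * ((n - T : ℕ) : ℝ) ^ (N * K) := by
        rw [mul_pow, ← exp_nat_mul, ← pow_mul, mul_comm K N]; ring_nf

lemma card_heavy_le {ε : ℝ} (hε0 : 0 < ε) (hε1 : ε < 1) {k n t N : ℕ} (hk8 : 8 ≤ k)
    (hklog : 128 * exp 33 * log k ≤ k) (ht1 : 1 ≤ t) (htT : t ≤ thetaOf ε k n)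
    (hN : n * exp (-k) ≤ N) (hN0 : 0 < N) :
    (#(univ.filter fun Φ : Formula n (mOf ε k n) k =>
        N ≤ #(univ.filter fun i => (k + 3) / 4 ≤ #(lateInZ Φ t i))) : ℝ) ≤
      exp (-k * N) * Fintype.card (Formula n (mOf ε k n) k) := by
  set T := thetaOf ε k n
  have hTn := thetaOf_le_half hε0.le hε1 hk8 hklog (ht1.trans htT)
  have hT1 : (1 : ℝ) ≤ T := by exact_mod_cast ht1.trans htT
  have hpow : (0 : ℝ) < ((n - T : ℕ) : ℝ) ^ (N * ((k + 3) / 4 - 1)) := by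
    have : T < n := by exact_mod_cast (show (T : ℝ) < n by linarith)
    exact pow_pos (Nat.cast_pos.mpr (by omega)) _
  have hcount :=
    card_heavy_mul_pow_le (n := n) (m := mOf ε k n) (k := k) (N := N) (K := (k + 3) / 4) htT
  have hcountR : (#(univ.filter fun Φ : Formula n (mOf ε k n) k =>
        N ≤ #(univ.filter fun i => (k + 3) / 4 ≤ #(lateInZ Φ t i))) : ℝ) *
      ((n - T : ℕ) : ℝ) ^ (N * ((k + 3) / 4 - 1)) ≤
      ((mOf ε k n).choose N : ℝ) * ((k * (T + 1)).choose ((k + 3) / 4 - 1) : ℝ) ^ N *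
        Fintype.card (Formula n (mOf ε k n) k) := by
    exact_mod_cast hcount
  refine le_of_mul_le_mul_right (hcountR.trans ?_) hpow
  calc _ ≤ exp (-k * N) * ((n - T : ℕ) : ℝ) ^ (N * ((k + 3) / 4 - 1)) *
          Fintype.card (Formula n (mOf ε k n) k) :=
        mul_le_mul_of_nonneg_right
          (choose_mul_choose_pow_le hε0 hε1 hk8 hklog (ht1.trans htT) hN hN0) (Nat.cast_nonneg _)
    _ = _ := by ring

/-- Lemma 13.  For each `1 ≤ t ≤ θ`, with probability at least
`1 - o(1/n)` (uniformly in `t`), at most `n exp(-k)` clauses have at least `k/4`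
positions `k₁ < j ≤ k` whose variable lies in `Z_t`. -/
theorem statement19 (ε : ℝ) (hε0 : 0 < ε) (hε1 : ε < 0.1) :
    ∃ k₀ : ℕ, ∀ k : ℕ, k₀ ≤ k →
    ∃ g : ℕ → ℝ, Tendsto (fun n : ℕ => (n : ℝ) * g n) atTop (nhds 0) ∧
      ∀ n t : ℕ, 1 ≤ t → t ≤ thetaOf ε k n →
        1 - Pr n (mOf ε k n) k {Φ : Formula n (mOf ε k n) k |
          ((Finset.univ.filter (fun i : Fin (mOf ε k n) =>
              (k : ℝ) / 4 ≤ ((Finset.univ.filter (fun j : Fin k =>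
                k1 k ≤ j.val ∧ (Φ i j).1 ∈ (p1 Φ t).Z)).card : ℝ))).card : ℝ)
            ≤ (n : ℝ) * Real.exp (-(k : ℝ))} ≤ g n := by
  obtain ⟨k₀, hk₀⟩ := eventually_atTop.mp eventually_log_le
  refine ⟨k₀, fun k hk => ?_⟩
  obtain ⟨hk8, hklog⟩ := hk₀ k hk
  have hε1' : ε < 1 := by norm_num at hε1; linarith
  have hrate : 0 < (k : ℝ) * exp (-k) :=
    mul_pos (Nat.cast_pos.mpr (by omega)) (exp_pos _)
  refine ⟨fun n => exp (-(k * exp (-k))) ^ n,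
    tendsto_self_mul_const_pow_of_lt_one (exp_pos _).le (exp_lt_one_iff.mpr (by linarith)),
    fun n t ht1 htT => ?_⟩
  set N := ⌊n * exp (-k)⌋₊ + 1
  have hN : n * exp (-k) ≤ N := by push_cast [N]; exact (Nat.lt_floor_add_one _).le
  have hn : 0 < n := Nat.pos_of_ne_zero fun h => by simp [h, thetaOf] at htT; omega
  have : Nonempty (Formula n (mOf ε k n) k) := ⟨fun _ _ => (⟨0, hn⟩, true)⟩
  have hcard : (0 : ℝ) < Fintype.card (Formula n (mOf ε k n) k) := Nat.cast_pos.mpr Fintype.card_pos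
  calc _ ≤ _ := one_sub_Pr_le (B := univ.filter fun Φ : Formula n (mOf ε k n) k =>
          N ≤ #(univ.filter fun i => (k + 3) / 4 ≤ #(lateInZ Φ t i))) fun Φ hΦ => by
        have hbad : n * exp (-k) < #(univ.filter fun i => (k : ℝ) / 4 ≤ #(lateInZ Φ t i)) :=
          not_le.mp hΦ
        simp only [div_four_le_natCast_iff] at hbad
        exact mem_filter.mpr ⟨mem_univ _, (Nat.floor_lt (by positivity)).mpr hbad⟩
    _ ≤ exp (-k * N) := by
        rw [div_le_iff₀ hcard]
        exact card_heavy_le hε0 hε1' hk8 hklog ht1 htT hN (Nat.succ_pos _)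
    _ ≤ exp (-(k * exp (-k))) ^ n := by
        rw [← exp_nat_mul, exp_le_exp]
        nlinarith

end RandomKSAT
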